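/- For any integers q ≥ 2 and i with 1 ≤ i ≤ q, in the group above one has ψ_i = ((i−1)q + i)·ψ_1, and (q^2+1)(q+1)·ψ_1 = 0. -/

import Mathlib

/-!
In the quotient, the column relations of the presentation matrix say that `i ↦ ψ_i` has
vanishing second differences, so it is an arithmetic progression; its first step
`ψ₂ - ψ₁ = (q+1)ψ₁` comes from the first relation, giving `ψ_i = ((i-1)q + i)ψ₁`. Substituting
`ψ_q = q²ψ₁` and `ψ_{q-1} = (q²-q-1)ψ₁` into the last relation gives
`(q³ + q² + q + 1)ψ₁ = 0`.
-/

theorem Matrix.mk_col_eq_zero {m n R : Type*} [Fintype n] [DecidableEq n] [CommRing R]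
    (M : Matrix m n R) (j : n) :
    (Submodule.Quotient.mk (M.col j) : (m → R) ⧸ LinearMap.range M.mulVecLin) = 0 :=
  (Submodule.Quotient.mk_eq_zero _).2 ⟨Pi.single j 1, M.mulVec_single_one j⟩

theorem eq_add_nsmul_of_add_eq_two_nsmul {G : Type*} [AddCommGroup G] {x : ℕ → G} {N : ℕ}
    (h : ∀ n, n + 2 ≤ N → x (n + 2) + x n = 2 • x (n + 1)) :
    ∀ n ≤ N, x n = x 0 + n • (x 1 - x 0) := by
  intro n
  induction n using Nat.twoStepInduction with
  | zero => simp
  | one => simp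
  | more n ih₀ ih₁ =>
    intro hn
    rw [eq_sub_of_add_eq (h n hn), ih₀ (by omega), ih₁ (by omega)]
    module

def relMatrix (q : ℕ) : Matrix (Fin q) (Fin q) ℤ :=
  Matrix.of fun i j =>
    if i = j then (if i.val = 0 ∨ i.val = q - 1 then (q : ℤ) + 2 else 2)
    else if i.val + 1 = j.val ∨ j.val + 1 = i.val then -1 else 0

/-- The basis vector `e_n` for `n < q`, and `0` for `q ≤ n`. -/
def singleNat (q n : ℕ) : Fin q → ℤ := fun i => if (i : ℕ) = n then 1 else 0

theorem singleNat_val {q : ℕ} (j : Fin q) : singleNat q j = Pi.single j 1 := by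
  funext i
  simp [singleNat, Pi.single_apply, Fin.val_inj]

theorem singleNat_self (q : ℕ) : singleNat q q = 0 := by
  funext i
  simp [singleNat, i.isLt.ne]

theorem relMatrix_col_zero {q : ℕ} (hq : 0 < q) :
    (relMatrix q).col ⟨0, hq⟩ = ((q : ℤ) + 2) • singleNat q 0 - singleNat q 1 := by
  funext i
  simp only [relMatrix, Matrix.col_apply, Matrix.of_apply, singleNat, Pi.sub_apply,
    Pi.smul_apply, smul_eq_mul, Fin.ext_iff]
  split_ifs <;> simp_all

theorem relMatrix_col_succ {q n : ℕ} (hn : n + 1 < q) :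
    (relMatrix q).col ⟨n + 1, hn⟩ = (if n + 2 = q then (q : ℤ) + 2 else 2) • singleNat q (n + 1)
      - singleNat q n - singleNat q (n + 2) := by
  funext i
  simp only [relMatrix, Matrix.col_apply, Matrix.of_apply, singleNat, Pi.sub_apply,
    Pi.smul_apply, smul_eq_mul, Fin.ext_iff]
  split_ifs <;> simp_all <;> omega

section Presentation

variable (q : ℕ)

abbrev RelCokernel : Type := (Fin q → ℤ) ⧸ LinearMap.range (relMatrix q).mulVecLin

/-- The generator `ψ_{n+1}`: generators are indexed from `0`. -/
abbrev relGen (n : ℕ) : RelCokernel q := Submodule.Quotient.mk (singleNat q n)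

variable {q}

theorem relGen_one (hq : 0 < q) : relGen q 1 = ((q : ℤ) + 2) • relGen q 0 := by
  have h := (relMatrix q).mk_col_eq_zero ⟨0, hq⟩
  rwa [relMatrix_col_zero, Submodule.Quotient.mk_sub, Submodule.Quotient.mk_smul, sub_eq_zero,
    eq_comm] at h

theorem relGen_add_two {n : ℕ} (hn : n + 2 < q) :
    relGen q (n + 2) + relGen q n = 2 • relGen q (n + 1) := by
  have h := (relMatrix q).mk_col_eq_zero ⟨n + 1, by omega⟩
  rw [relMatrix_col_succ, if_neg hn.ne, Submodule.Quotient.mk_sub, Submodule.Quotient.mk_sub,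
    Submodule.Quotient.mk_smul] at h
  rw [← natCast_zsmul, Nat.cast_ofNat, eq_comm, ← sub_eq_zero, ← h]
  abel

theorem relGen_last (k : ℕ) :
    (((k + 2 : ℕ) : ℤ) + 2) • relGen (k + 2) (k + 1) = relGen (k + 2) k := by
  have h := (relMatrix (k + 2)).mk_col_eq_zero ⟨k + 1, by omega⟩
  rw [relMatrix_col_succ, if_pos rfl, singleNat_self, Submodule.Quotient.mk_sub,
    Submodule.Quotient.mk_sub, Submodule.Quotient.mk_smul, Submodule.Quotient.mk_zero, sub_zero,
    sub_eq_zero] at h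
  exact h

theorem relGen_eq_zsmul_relGen_zero {n : ℕ} (hn : n < q) :
    relGen q n = ((n : ℤ) * q + n + 1) • relGen q 0 := by
  rw [eq_add_nsmul_of_add_eq_two_nsmul (N := q - 1) (fun m hm ↦ relGen_add_two (by omega)) n
    (by omega), relGen_one (by omega), ← natCast_zsmul]
  module

theorem zsmul_relGen_zero_eq_zero (hq : 2 ≤ q) :
    (((q : ℤ) ^ 2 + 1) * ((q : ℤ) + 1)) • relGen q 0 = 0 := by
  obtain ⟨k, rfl⟩ := Nat.exists_eq_add_of_le' hq
  have h := relGen_last k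
  rw [relGen_eq_zsmul_relGen_zero (n := k + 1) (by omega),
    relGen_eq_zsmul_relGen_zero (n := k) (by omega), smul_smul, ← sub_eq_zero, ← sub_smul] at h
  rw [← h]
  congr 1
  push_cast
  ring

end Presentation

/-- In the abelian group presented by `(q+2)ψ_q = ψ_{q-1}`, `2ψ_i = ψ_{i+1} + ψ_{i-1}`
(`1 < i < q`), `(q+2)ψ₁ = ψ₂` (i.e. the cokernel of the matrix `M`), one has
`ψ_i = ((i-1)q + i)·ψ₁` for `1 ≤ i ≤ q` (here `i = j+1` for `j : Fin q`) and
`(q²+1)(q+1)·ψ₁ = 0`. -/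
theorem stmt_6 (q : ℕ) (hq : 2 ≤ q)
    (M : Matrix (Fin q) (Fin q) ℤ)
    (hM : ∀ i j : Fin q, M i j =
      if i = j then (if i.val = 0 ∨ i.val = q - 1 then (q : ℤ) + 2 else 2)
      else if i.val + 1 = j.val ∨ j.val + 1 = i.val then -1 else 0) :
    (∀ j : Fin q,
      (Submodule.Quotient.mk (Pi.single j (1 : ℤ)) :
          (Fin q → ℤ) ⧸ LinearMap.range M.mulVecLin)
        = ((j.val : ℤ) * q + j.val + 1) •
            (Submodule.Quotient.mk (Pi.single (⟨0, by omega⟩ : Fin q) (1 : ℤ)))) ∧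
    ((((q : ℤ) ^ 2 + 1) * ((q : ℤ) + 1)) •
        (Submodule.Quotient.mk (Pi.single (⟨0, by omega⟩ : Fin q) (1 : ℤ)) :
          (Fin q → ℤ) ⧸ LinearMap.range M.mulVecLin) = 0) := by
  obtain rfl : M = relMatrix q := Matrix.ext hM
  simp only [← singleNat_val]
  exact ⟨fun j ↦ relGen_eq_zsmul_relGen_zero j.isLt, zsmul_relGen_zero_eq_zero hq⟩
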